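/- arXiv:math/0501459 — 7 statements merged into one kernel-verified Lean document; each statement's English description precedes it below -/
import Mathlib

section
/- Every distributive lattice satisfies the uniform refinement property (URP) at every element. -/
/-- Every distributive lattice satisfies the uniform refinement property at every element. -/
theorem distribLattice_URP {D : Type*} [DistribLattice D] (e : D)
    (I : Type) (a b : I → D) (h : ∀ i, a i ⊔ b i = e) :
    ∃ (a' b' : I → D) (c : I → I → D),
      (∀ i, a' i ≤ a i ∧ b' i ≤ b i ∧ a' i ⊔ b' i = e) ∧
      (∀ i j, c i j ≤ a' i ∧ c i j ≤ b' j ∧ a' i ≤ a' j ⊔ c i j) ∧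
      (∀ i j k, c i k ≤ c i j ⊔ c j k) := by
  have hle : ∀ i, a i ≤ e := fun i => (h i) ▸ le_sup_left
  refine ⟨a, b, fun i j => a i ⊓ b j, fun i => ⟨le_rfl, le_rfl, h i⟩, ?_, ?_⟩
  · refine fun i j => ⟨inf_le_left, inf_le_right, ?_⟩
    calc a i = a i ⊓ (a j ⊔ b j) := by rw [h j, inf_eq_left.2 (hle i)]
    _ = a i ⊓ a j ⊔ a i ⊓ b j := inf_sup_left _ _ _
    _ ≤ a j ⊔ a i ⊓ b j := sup_le_sup_right inf_le_right _
  · intro i j k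
    calc a i ⊓ b k = a i ⊓ b k ⊓ (a j ⊔ b j) := by
          rw [h j, inf_eq_left.2 (le_trans inf_le_left (hle i))]
    _ = a i ⊓ b k ⊓ a j ⊔ a i ⊓ b k ⊓ b j := inf_sup_left _ _ _
    _ ≤ a i ⊓ b j ⊔ a j ⊓ b k := by
        apply sup_le
        · exact le_sup_of_le_right
            (le_inf inf_le_right (le_trans inf_le_left inf_le_right))
        · exact le_sup_of_le_left
            (le_inf (le_trans inf_le_left inf_le_left) inf_le_right)
end

section
/- In a distributive lattice, the elements a*_i = a_i, b*_i = b_i, and c_{ij} = a_i ∧ b_j witness the URP: given a_i ∨ b_i = e for all i, one has (i) a_i ∨ b_i = e; (ii) a_i ∧ b_j ≤ a_i, a_i ∧ b_j ≤ b_j, and a_i ≤ a_j ∨ (a_i ∧ b_j); (iii) a_i ∧ b_k ≤ (a_i ∧ b_j) ∨ (a_j ∧ b_k). -/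
/-- In a distributive lattice, the elements `a*_i = a_i`, `b*_i = b_i`, `c_{ij} = a_i ⊓ b_j`
witness the uniform refinement property. -/
theorem distribLattice_URP_witnesses {D : Type*} [DistribLattice D] (e : D)
    {I : Type} (a b : I → D) (h : ∀ i, a i ⊔ b i = e) :
    (∀ i, a i ⊔ b i = e) ∧
    (∀ i j, a i ⊓ b j ≤ a i ∧ a i ⊓ b j ≤ b j ∧ a i ≤ a j ⊔ (a i ⊓ b j)) ∧
    (∀ i j k, a i ⊓ b k ≤ (a i ⊓ b j) ⊔ (a j ⊓ b k)) := by
  have key : ∀ (j : I) (x : D), x ≤ e → x ≤ (x ⊓ a j) ⊔ (x ⊓ b j) := by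
    intro j x hx
    calc x = x ⊓ e := (inf_eq_left.2 hx).symm
    _ = x ⊓ (a j ⊔ b j) := by rw [h j]
    _ ≤ (x ⊓ a j) ⊔ (x ⊓ b j) := le_of_eq (inf_sup_left x (a j) (b j))
  refine ⟨h, fun i j => ⟨inf_le_left, inf_le_right, ?_⟩, fun i j k => ?_⟩
  · have hae : a i ≤ e := (h i) ▸ le_sup_left
    exact (key j (a i) hae).trans (sup_le_sup inf_le_right le_rfl)
  · have hle : a i ⊓ b k ≤ e := le_trans inf_le_left ((h i) ▸ le_sup_left)
    refine (key j (a i ⊓ b k) hle).trans (sup_le ?_ ?_)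
    · exact le_sup_of_le_right (le_inf (le_trans inf_le_right le_rfl)
        (le_trans inf_le_left inf_le_right))
    · exact le_sup_of_le_left (le_inf (le_trans inf_le_left inf_le_left) inf_le_right)
end

section
/- If μ: S → T is a weak-distributive homomorphism of join-semilattices with zero and the weak uniform refinement property holds at e in S, then it holds at μ(e) in T. -/
/-- If `μ : S → T` is a weak-distributive homomorphism of join-semilattices with zero and
the weak uniform refinement property holds at `e` in `S`, then it holds at `μ e` in `T`. -/
theorem WURP_of_weakDistributive {S T : Type*}
    [SemilatticeSup S] [OrderBot S] [SemilatticeSup T] [OrderBot T]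
    (μ : S → T) (hsup : ∀ x y, μ (x ⊔ y) = μ x ⊔ μ y) (hbot : μ ⊥ = ⊥)
    (hwd : ∀ (x : S) (b₀ b₁ : T), μ x = b₀ ⊔ b₁ →
      ∃ a₀ a₁ : S, μ a₀ ≤ b₀ ∧ μ a₁ ≤ b₁ ∧ x = a₀ ⊔ a₁)
    (e : S)
    (hWURP : ∀ (I : Type) (a b : I → S), (∀ i, a i ⊔ b i = e) →
      ∃ c : I → I → S,
        (∀ i j, c i j ≤ a i ∧ c i j ≤ b j) ∧
        (∀ i j, c i j ⊔ a j ⊔ b i = e) ∧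
        (∀ i j k, c i k ≤ c i j ⊔ c j k)) :
    ∀ (I : Type) (a b : I → T), (∀ i, a i ⊔ b i = μ e) →
      ∃ c : I → I → T,
        (∀ i j, c i j ≤ a i ∧ c i j ≤ b j) ∧
        (∀ i j, c i j ⊔ a j ⊔ b i = μ e) ∧
        (∀ i j k, c i k ≤ c i j ⊔ c j k) := by
  intro I a b hab
  have hmono : ∀ {x y : S}, x ≤ y → μ x ≤ μ y := by
    intro x y hxy
    have : μ (x ⊔ y) = μ x ⊔ μ y := hsup x y
    rw [sup_eq_right.2 hxy] at this
    exact le_sup_left.trans this.ge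
  choose a' b' ha' hb' he using fun i => hwd e (a i) (b i) (hab i).symm
  obtain ⟨c', hc1, hc2, hc3⟩ := hWURP I a' b' (fun i => (he i).symm)
  refine ⟨fun i j => μ (c' i j), ?_, ?_, ?_⟩
  · intro i j
    exact ⟨(hmono (hc1 i j).1).trans (ha' i), (hmono (hc1 i j).2).trans (hb' j)⟩
  · intro i j
    apply le_antisymm
    · refine sup_le (sup_le ?_ ?_) ?_
      · exact (hmono (hc1 i j).1).trans ((ha' i).trans (le_sup_left.trans (hab i).le))
      · exact le_sup_left.trans (hab j).le
      · exact le_sup_right.trans (hab i).le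
    · calc μ e = μ (c' i j ⊔ a' j ⊔ b' i) := by rw [hc2 i j]
        _ = μ (c' i j) ⊔ μ (a' j) ⊔ μ (b' i) := by rw [hsup, hsup]
        _ ≤ μ (c' i j) ⊔ a j ⊔ b i :=
            sup_le_sup (sup_le_sup_left (ha' j) _) (hb' i)
  · intro i j k
    calc μ (c' i k) ≤ μ (c' i j ⊔ c' j k) := hmono (hc3 i j k)
      _ = μ (c' i j) ⊔ μ (c' j k) := hsup _ _
end

section
/- If μ: S → T is a weak-distributive homomorphism of join-semilattices with zero and the uniform refinement property (URP) holds at e in S, then URP holds at μ(e) in T. -/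
/-- If `μ : S → T` is a weak-distributive homomorphism of join-semilattices with zero and
the uniform refinement property holds at `e` in `S`, then it holds at `μ e` in `T`. -/
theorem URP_of_weakDistributive {S T : Type*}
    [SemilatticeSup S] [OrderBot S] [SemilatticeSup T] [OrderBot T]
    (μ : S → T) (hsup : ∀ x y, μ (x ⊔ y) = μ x ⊔ μ y) (hbot : μ ⊥ = ⊥)
    (hwd : ∀ (x : S) (b₀ b₁ : T), μ x = b₀ ⊔ b₁ →
      ∃ a₀ a₁ : S, μ a₀ ≤ b₀ ∧ μ a₁ ≤ b₁ ∧ x = a₀ ⊔ a₁)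
    (e : S)
    (hURP : ∀ (I : Type) (a b : I → S), (∀ i, a i ⊔ b i = e) →
      ∃ (a' b' : I → S) (c : I → I → S),
        (∀ i, a' i ≤ a i ∧ b' i ≤ b i ∧ a' i ⊔ b' i = e) ∧
        (∀ i j, c i j ≤ a' i ∧ c i j ≤ b' j ∧ a' i ≤ a' j ⊔ c i j) ∧
        (∀ i j k, c i k ≤ c i j ⊔ c j k)) :
    ∀ (I : Type) (a b : I → T), (∀ i, a i ⊔ b i = μ e) →
      ∃ (a' b' : I → T) (c : I → I → T),
        (∀ i, a' i ≤ a i ∧ b' i ≤ b i ∧ a' i ⊔ b' i = μ e) ∧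
        (∀ i j, c i j ≤ a' i ∧ c i j ≤ b' j ∧ a' i ≤ a' j ⊔ c i j) ∧
        (∀ i j k, c i k ≤ c i j ⊔ c j k) := by
  intro I a b hab
  have hmono : ∀ x y : S, x ≤ y → μ x ≤ μ y := by
    intro x y h
    have : μ (x ⊔ y) = μ x ⊔ μ y := hsup x y
    rw [sup_eq_right.mpr h] at this
    exact le_sup_left.trans this.ge
  choose x y hx hy hxy using fun i => hwd e (a i) (b i) (hab i).symm
  obtain ⟨x', y', c, h1, h2, h3⟩ := hURP I x y (fun i => (hxy i).symm)
  refine ⟨fun i => μ (x' i), fun i => μ (y' i), fun i j => μ (c i j), ?_, ?_, ?_⟩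
  · intro i
    exact ⟨(hmono _ _ (h1 i).1).trans (hx i), (hmono _ _ (h1 i).2.1).trans (hy i),
      by rw [← hsup, (h1 i).2.2]⟩
  · intro i j
    refine ⟨hmono _ _ (h2 i j).1, hmono _ _ (h2 i j).2.1, ?_⟩
    calc μ (x' i) ≤ μ (x' j ⊔ c i j) := hmono _ _ (h2 i j).2.2
    _ = μ (x' j) ⊔ μ (c i j) := hsup _ _
  · intro i j k
    calc μ (c i k) ≤ μ (c i j ⊔ c j k) := hmono _ _ (h3 i j k)
    _ = μ (c i j) ⊔ μ (c j k) := hsup _ _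
end

section
/- In any distributive lattice, if a ≤ b ≤ c ≤ d, then the intersection of the congruences Θ(a,b) and Θ(c,d) is the trivial (identity) congruence. -/
/-- A lattice congruence on `L`: an equivalence relation compatible with `⊔` and `⊓`. -/
structure LatticeCon' (L : Type*) [Lattice L] where
  r : L → L → Prop
  refl : ∀ x, r x x
  symm : ∀ {x y}, r x y → r y x
  trans : ∀ {x y z}, r x y → r y z → r x z
  sup : ∀ {a b c d}, r a b → r c d → r (a ⊔ c) (b ⊔ d)
  inf : ∀ {a b c d}, r a b → r c d → r (a ⊓ c) (b ⊓ d)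

namespace LatticeCon'
variable {L : Type*} [Lattice L]

instance : PartialOrder (LatticeCon' L) where
  le θ φ := ∀ x y, θ.r x y → φ.r x y
  le_refl θ := fun _ _ h => h
  le_trans θ φ ψ h1 h2 := fun x y h => h2 x y (h1 x y h)
  le_antisymm θ φ h1 h2 := by
    cases θ; cases φ
    simp only [LatticeCon'.mk.injEq]
    funext x y
    exact propext ⟨h1 x y, h2 x y⟩

instance : InfSet (LatticeCon' L) where
  sInf S :=
  { r := fun x y => ∀ θ ∈ S, θ.r x y
    refl := fun x θ _ => θ.refl x
    symm := fun h θ hθ => θ.symm (h θ hθ)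
    trans := fun h1 h2 θ hθ => θ.trans (h1 θ hθ) (h2 θ hθ)
    sup := fun h1 h2 θ hθ => θ.sup (h1 θ hθ) (h2 θ hθ)
    inf := fun h1 h2 θ hθ => θ.inf (h1 θ hθ) (h2 θ hθ) }

instance : CompleteLattice (LatticeCon' L) :=
  completeLatticeOfInf _ (fun _ =>
    ⟨fun θ hθ _ _ h => h θ hθ, fun _ hφ _ _ h θ hθ => hφ hθ _ _ h⟩)

end LatticeCon'

/-- `theta a b` is the principal congruence generated by the pair `(a, b)`. -/
def theta {L : Type*} [Lattice L] (a b : L) : LatticeCon' L :=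
  sInf {θ : LatticeCon' L | θ.r a b}

/-- `thetaPlus a b = Θ⁺(a,b) = Θ(a ⊓ b, a)`, the least congruence collapsing `a` below `b`. -/
def thetaPlus {L : Type*} [Lattice L] (a b : L) : LatticeCon' L :=
  theta (a ⊓ b) a

/-!
`Θ(a,b)` lies in the kernel of `x ↦ (x ⊓ a, x ⊔ b)` and `Θ(c,d)` in that of `x ↦ (x ⊓ c, x ⊔ d)`.
If `x ≡ y` modulo both, then `x ⊔ b = y ⊔ b` and `x ⊓ c = y ⊓ c`; meeting the latter with `b ≤ c`
gives `x ⊓ b = y ⊓ b`, and in a distributive lattice an element is determined by its meet and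
join with `b`, so `x = y`.
-/

theorem theta_le_of_r {L : Type*} [Lattice L] {θ : LatticeCon' L} {a b : L} (h : θ.r a b) :
    theta a b ≤ θ :=
  sInf_le h

namespace LatticeCon'

variable {L : Type*}

section Lattice

variable [Lattice L]

theorem inf_r_iff {θ φ : LatticeCon' L} {x y : L} : (θ ⊓ φ).r x y ↔ θ.r x y ∧ φ.r x y :=
  ⟨fun h => ⟨inf_le_left (a := θ) x y h, inf_le_right (a := θ) x y h⟩,
    fun ⟨hθ, hφ⟩ => by rintro ψ (rfl | rfl) <;> assumption⟩

theorem eq_bot_of_forall_r_eq {θ : LatticeCon' L} (h : ∀ x y, θ.r x y → x = y) : θ = ⊥ :=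
  eq_bot_iff.2 fun x y hxy => h x y hxy ▸ fun ψ _ => ψ.refl x

end Lattice

variable [DistribLattice L]

def infSupKer (a b : L) : LatticeCon' L where
  r x y := x ⊓ a = y ⊓ a ∧ x ⊔ b = y ⊔ b
  refl _ := ⟨rfl, rfl⟩
  symm h := ⟨h.1.symm, h.2.symm⟩
  trans h₁ h₂ := ⟨h₁.1.trans h₂.1, h₁.2.trans h₂.2⟩
  sup h₁ h₂ := by
    refine ⟨by rw [inf_sup_right, inf_sup_right, h₁.1, h₂.1], ?_⟩
    rw [← sup_idem b, sup_sup_sup_comm, sup_sup_sup_comm _ _ b, h₁.2, h₂.2]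
  inf h₁ h₂ := by
    refine ⟨?_, by rw [sup_inf_right, sup_inf_right, h₁.2, h₂.2]⟩
    rw [← inf_idem a, inf_inf_inf_comm, inf_inf_inf_comm _ _ a, h₁.1, h₂.1]

theorem theta_le_infSupKer {a b : L} (hab : a ≤ b) : theta a b ≤ infSupKer a b :=
  theta_le_of_r ⟨by rw [inf_idem, inf_eq_right.2 hab], by rw [sup_idem, sup_eq_right.2 hab]⟩

theorem infSupKer_inf_infSupKer_eq_bot {a b c d : L} (hbc : b ≤ c) :
    infSupKer a b ⊓ infSupKer c d = ⊥ := by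
  refine eq_bot_of_forall_r_eq fun x y hxy => ?_
  obtain ⟨⟨-, hsup⟩, ⟨hinf, -⟩⟩ := inf_r_iff.1 hxy
  have hinf_b : x ⊓ b = y ⊓ b := by
    rw [← inf_eq_right.2 hbc, ← inf_assoc, ← inf_assoc, hinf]
  exact eq_of_inf_eq_sup_eq hinf_b hsup

end LatticeCon'

/-- In a distributive lattice, if `a ≤ b ≤ c ≤ d` then `Θ(a,b) ⊓ Θ(c,d)` is trivial. -/
theorem theta_inf_theta_eq_bot {L : Type*} [DistribLattice L] {a b c d : L}
    (hab : a ≤ b) (hbc : b ≤ c) (hcd : c ≤ d) :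
    theta a b ⊓ theta c d = (⊥ : LatticeCon' L) :=
  eq_bot_iff.2 <|
    (inf_le_inf (LatticeCon'.theta_le_infSupKer hab) (LatticeCon'.theta_le_infSupKer hcd)).trans
      (LatticeCon'.infSupKer_inf_infSupKer_eq_bot hbc).le
end

section
/- Kuratowski's free set theorem for n = 2: if X is a set of cardinality at least ℵ₂ and F assigns to each 2-element subset of X a finite subset of X, then there exist three pairwise distinct elements x_0, x_1, x_2 ∈ X such that x_0 ∉ F({x_1,x_2}), x_1 ∉ F({x_0,x_2}), and x_2 ∉ F({x_0,x_1}). -/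
open Cardinal Set

private def kfsC {X : Type*} (g : X → X → Set X) (S : Set X) : ℕ → Set X
  | 0 => S
  | n + 1 => kfsC g S n ∪ ⋃ p : kfsC g S n × kfsC g S n, g p.1.1 p.2.1

lemma kfs_closure {X : Type*} (g : X → X → Set X) (hg : ∀ a b, (g a b).Countable)
    (S : Set X) : ∃ Y : Set X, S ⊆ Y ∧ (∀ a ∈ Y, ∀ b ∈ Y, g a b ⊆ Y) ∧
      #Y ≤ max (#S) ℵ₀ ∧ ∀ T : Set X, S ⊆ T → (∀ a b, g a b ⊆ T) → Y ⊆ T := by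
  set C := kfsC g S with hC
  have hCsucc : ∀ n, C (n + 1) = C n ∪ ⋃ p : C n × C n, g p.1.1 p.2.1 := fun n => rfl
  have hmono : ∀ n, C n ⊆ C (n + 1) := by
    intro n; rw [hCsucc]; exact subset_union_left
  have hmono' : Monotone C := monotone_nat_of_le_succ hmono
  refine ⟨⋃ n, C n, subset_iUnion C 0, ?_, ?_, ?_⟩
  · rintro a ha b hb
    obtain ⟨m, hm⟩ := mem_iUnion.1 ha
    obtain ⟨k, hk⟩ := mem_iUnion.1 hb
    have ha' : a ∈ C (max m k) := hmono' (le_max_left m k) hm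
    have hb' : b ∈ C (max m k) := hmono' (le_max_right m k) hk
    have h1 : g a b ⊆ C (max m k + 1) := by
      rw [hCsucc]
      exact subset_union_of_subset_right
        (subset_iUnion (fun p : C (max m k) × C (max m k) => g p.1.1 p.2.1) (⟨a, ha'⟩, ⟨b, hb'⟩)) _
    exact h1.trans (subset_iUnion C (max m k + 1))
  · set κ := max (#S) ℵ₀ with hκdef
    have hκ : ℵ₀ ≤ κ := le_max_right _ _
    have key : ∀ n, #(C n) ≤ κ := by
      intro n
      induction n with
      | zero => exact le_max_left _ _
      | succ n ih =>
        rw [hCsucc]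
        refine (mk_union_le _ _).trans ?_
        have h2 : #(⋃ p : C n × C n, g p.1.1 p.2.1) ≤ κ := by
          refine (mk_iUnion_le _).trans ?_
          have hι : #(↥(C n) × ↥(C n)) ≤ κ := by
            rw [mk_prod]; simp only [lift_id]
            exact (mul_le_mul' ih ih).trans (mul_eq_self hκ).le
          have hsup : ⨆ p : ↥(C n) × ↥(C n), #(g p.1.1 p.2.1) ≤ ℵ₀ :=
            ciSup_le' fun p => (hg _ _).le_aleph0
          refine (mul_le_mul' hι hsup).trans ?_
          exact (mul_le_mul' le_rfl hκ).trans (mul_eq_self hκ).le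
        exact (add_le_add ih h2).trans (add_eq_self hκ).le
    have hU : (⋃ n, C n) = ⋃ m : ULift.{_} ℕ, C m.down := by
      ext x; simp only [mem_iUnion]
      exact ⟨fun ⟨n, hn⟩ => ⟨⟨n⟩, hn⟩, fun ⟨m, hm⟩ => ⟨m.down, hm⟩⟩
    rw [hU]
    refine (mk_iUnion_le _).trans ?_
    have h1 : #(ULift ℕ) ≤ κ := by simpa using hκ
    have h2 : ⨆ m : ULift ℕ, #(C m.down) ≤ κ := ciSup_le' fun m => key m.down
    exact (mul_le_mul' h1 h2).trans (mul_eq_self hκ).le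
  · intro T hST hgT
    refine iUnion_subset fun n => ?_
    induction n with
    | zero => exact hST
    | succ n ih =>
      rw [hCsucc]
      exact union_subset ih (iUnion_subset fun p => hgT _ _)


/-- Kuratowski's free set theorem for `n = 2`: if `|X| ≥ ℵ₂` and `F` assigns a finite
subset of `X` to each (2-element) subset of `X`, then there exist pairwise distinct
`x₀, x₁, x₂ ∈ X` with `x₀ ∉ F {x₁, x₂}`, `x₁ ∉ F {x₀, x₂}`, `x₂ ∉ F {x₀, x₁}`. -/
theorem kuratowski_free_set {X : Type*} [DecidableEq X] (hX : Cardinal.aleph 2 ≤ Cardinal.mk X)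
    (F : Finset X → Finset X) :
    ∃ x₀ x₁ x₂ : X, x₀ ≠ x₁ ∧ x₀ ≠ x₂ ∧ x₁ ≠ x₂ ∧
      x₀ ∉ F {x₁, x₂} ∧ x₁ ∉ F {x₀, x₂} ∧ x₂ ∉ F {x₀, x₁} := by
  classical
  have h12 : (aleph 1 : Cardinal) ≤ aleph 2 := aleph_le_aleph.2 (by norm_num)
  obtain ⟨S, hS⟩ := le_mk_iff_exists_set.1 (h12.trans hX)
  obtain ⟨Y, hSY, hYcl, hYcard, -⟩ :=
    kfs_closure (fun a b => (↑(F {a, b}) : Set X))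
      (fun a b => (F {a, b}).countable_toSet) S
  have hSYle : (aleph 1 : Cardinal) ≤ #Y := hS ▸ mk_le_mk_of_subset hSY
  have hYle : #Y ≤ aleph 1 := by
    rw [hS, max_eq_left (aleph0_le_aleph 1)] at hYcard
    exact hYcard
  obtain ⟨x₂, hx₂⟩ : ∃ x₂, x₂ ∉ Y := by
    by_contra h; push_neg at h
    have hY : Y = Set.univ := eq_univ_of_forall h
    have mk_univ : #(Set.univ : Set X) = #X := Cardinal.mk_univ
    have : aleph 2 ≤ aleph 1 := by
      calc aleph 2 ≤ #X := hX
        _ = #Y := by rw [hY, mk_univ]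
        _ ≤ aleph 1 := hYle
    exact absurd (aleph_le_aleph.1 this) (by norm_num)
  obtain ⟨Z₀, hZ₀Y, hZ₀card⟩ :=
    le_mk_iff_exists_subset.1 ((aleph0_le_aleph 1).trans hSYle)
  obtain ⟨Z, hZ0Z, hZcl, hZcard, hZmin⟩ :=
    kfs_closure (fun a _ => (↑(F {a, x₂}) : Set X) ∩ Y)
      (fun a b => ((F {a, x₂}).countable_toSet).mono inter_subset_left) Z₀
  have hZY : Z ⊆ Y := hZmin Y hZ₀Y (fun a b => inter_subset_right)
  have hZle : #Z ≤ ℵ₀ := by rw [hZ₀card, max_self] at hZcard; exact hZcard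
  obtain ⟨x₁, hx₁Y, hx₁Z⟩ : ∃ x₁ ∈ Y, x₁ ∉ Z := by
    by_contra h; push_neg at h
    have : aleph 1 ≤ ℵ₀ := hSYle.trans ((mk_le_mk_of_subset h).trans hZle)
    exact absurd this (by simpa using aleph0_lt_aleph_one.not_le)
  have hZinf : Z.Infinite :=
    infinite_coe_iff.1 (infinite_iff.2 (hZ₀card ▸ mk_le_mk_of_subset hZ0Z))
  obtain ⟨x₀, hx₀Z, hx₀F⟩ := (hZinf.diff (F {x₁, x₂}).finite_toSet).nonempty
  refine ⟨x₀, x₁, x₂, ?_, ?_, ?_, ?_, ?_, ?_⟩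
  · exact fun h => hx₁Z (h ▸ hx₀Z)
  · exact fun h => hx₂ (h ▸ hZY hx₀Z)
  · exact fun h => hx₂ (h ▸ hx₁Y)
  · exact fun h => hx₀F (Finset.mem_coe.2 h)
  · exact fun h => hx₁Z (hZcl x₀ hx₀Z x₀ hx₀Z ⟨Finset.mem_coe.2 h, hx₁Y⟩)
  · exact fun h => hx₂ (hYcl x₀ (hZY hx₀Z) x₁ hx₁Y (Finset.mem_coe.2 h))
end

section
/- Every sectionally complemented lattice is congruence splitting. -/
/-!
Let `c` be a sectional complement of `a` in `[a, b]`. Since `Θ(a, b) = α₀ ⊔ α₁` collapses `a` and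
`b`, meeting with `c` shows that it collapses `⊥` and `c`, so `c` is reached from `⊥` by a chain
whose links are collapsed by `α₀` or by `α₁`. Walk along the chain, keeping the join `j` of the
elements visited so far: each link enlarges `j ⊓ c` by a sectional complement `d`, which the
congruence of that link collapses onto `⊥`. Sorting these `d` by their congruence writes
`c = d₀ ⊔ d₁` with `d_i ≡ ⊥ (mod α_i)`, and `x_i = a ⊔ d_i` does the job.
-/

open Relation

def IsSectionallyComplemented (L : Type*) [Lattice L] [OrderBot L] : Prop :=
  ∀ a b : L, a ≤ b → ∃ c : L, a ⊓ c = ⊥ ∧ a ⊔ c = b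

theorem theta_le_iff {L : Type*} [Lattice L] {a b : L} {θ : LatticeCon' L} :
    theta a b ≤ θ ↔ θ.r a b :=
  ⟨fun h => h a b fun _ hφ => hφ, fun h _ _ hxy => hxy θ h⟩

namespace LatticeCon'

variable {L : Type*} [Lattice L]

theorem rel_sup_left (θ : LatticeCon' L) {x y : L} (u : L) (h : θ.r x y) :
    θ.r (u ⊔ x) (u ⊔ y) :=
  θ.sup (θ.refl u) h

theorem rel_inf_right (θ : LatticeCon' L) {x y : L} (u : L) (h : θ.r x y) :
    θ.r (x ⊓ u) (y ⊓ u) :=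
  θ.inf h (θ.refl u)

def supChain (α β : LatticeCon' L) : LatticeCon' L where
  r := ReflTransGen fun u v => α.r u v ∨ β.r u v
  refl _ := .refl
  symm h := ReflTransGen.mono (fun _ _ h => h.imp α.symm β.symm) _ _ (ReflTransGen.swap _ _ h)
  trans := ReflTransGen.trans
  sup {_ b c _} h₁ h₂ :=
    (h₁.lift (· ⊔ c) fun _ _ h => h.imp (α.sup · (α.refl c)) (β.sup · (β.refl c))).trans
      (h₂.lift (b ⊔ ·) fun _ _ h => h.imp (α.sup (α.refl b)) (β.sup (β.refl b)))
  inf {_ b c _} h₁ h₂ :=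
    (h₁.lift (· ⊓ c) fun _ _ h => h.imp (α.inf · (α.refl c)) (β.inf · (β.refl c))).trans
      (h₂.lift (b ⊓ ·) fun _ _ h => h.imp (α.inf (α.refl b)) (β.inf (β.refl b)))

theorem sup_le_supChain (α β : LatticeCon' L) : α ⊔ β ≤ supChain α β :=
  sup_le (fun _ _ h => ReflTransGen.single (.inl h)) (fun _ _ h => ReflTransGen.single (.inr h))

variable [OrderBot L]

theorem rel_bot_of_inf_eq_bot (θ : LatticeCon' L) {u v d : L} (h : θ.r u v)
    (hud : u ⊓ d = ⊥) (hdv : d ≤ v) : θ.r ⊥ d := by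
  simpa only [hud, inf_eq_right.2 hdv] using θ.rel_inf_right d h

section Splitting

variable (α₀ α₁ : LatticeCon' L)

def IsSplit (x : L) : Prop :=
  ∃ d₀ d₁ : L, α₀.r ⊥ d₀ ∧ α₁.r ⊥ d₁ ∧ d₀ ⊔ d₁ = x

theorem isSplit_bot : IsSplit α₀ α₁ ⊥ :=
  ⟨⊥, ⊥, α₀.refl ⊥, α₁.refl ⊥, sup_idem ⊥⟩

variable {α₀ α₁}

theorem IsSplit.of_rel (hL : IsSectionallyComplemented L) {w w' : L} (hw : IsSplit α₀ α₁ w)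
    (hle : w ≤ w') (h : α₀.r w w' ∨ α₁.r w w') : IsSplit α₀ α₁ w' := by
  obtain ⟨d₀, d₁, h₀, h₁, rfl⟩ := hw
  obtain ⟨d, hd, rfl⟩ := hL _ w' hle
  rcases h with h | h
  · refine ⟨d₀ ⊔ d, d₁, ?_, h₁, sup_right_comm ..⟩
    simpa only [bot_sup_eq] using α₀.sup h₀ (α₀.rel_bot_of_inf_eq_bot h hd le_sup_right)
  · refine ⟨d₀, d₁ ⊔ d, h₀, ?_, (sup_assoc ..).symm⟩
    simpa only [bot_sup_eq] using α₁.sup h₁ (α₁.rel_bot_of_inf_eq_bot h hd le_sup_right)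

theorem exists_le_isSplit_inf (hL : IsSectionallyComplemented L) (c : L) {y : L}
    (hy : (supChain α₀ α₁).r ⊥ y) : ∃ j, y ≤ j ∧ IsSplit α₀ α₁ (j ⊓ c) := by
  induction hy with
  | refl => exact ⟨⊥, le_rfl, by simpa only [bot_inf_eq] using isSplit_bot α₀ α₁⟩
  | @tail p q _ hpq ih =>
    obtain ⟨j, hpj, hj⟩ := ih
    have hstep (α : LatticeCon' L) (h : α.r p q) : α.r (j ⊓ c) ((j ⊔ q) ⊓ c) := by
      simpa only [sup_eq_left.2 hpj] using α.rel_inf_right c (α.rel_sup_left j h)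
    exact ⟨j ⊔ q, le_sup_right,
      hj.of_rel hL (inf_le_inf_right c le_sup_left) (hpq.imp (hstep α₀) (hstep α₁))⟩

theorem isSplit_of_rel_bot (hL : IsSectionallyComplemented L) {c : L}
    (hc : (α₀ ⊔ α₁).r ⊥ c) : IsSplit α₀ α₁ c := by
  obtain ⟨j, hcj, hj⟩ := exists_le_isSplit_inf hL c (sup_le_supChain α₀ α₁ ⊥ c hc)
  rwa [inf_eq_right.2 hcj] at hj

end Splitting

end LatticeCon'

/-- Every sectionally complemented lattice is congruence splitting. -/
theorem sectionallyComplemented_congruenceSplitting {L : Type*} [Lattice L] [OrderBot L]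
    (hsec : ∀ a b : L, a ≤ b → ∃ c : L, a ⊓ c = ⊥ ∧ a ⊔ c = b) :
    ∀ a b : L, a ≤ b → ∀ α₀ α₁ : LatticeCon' L, theta a b = α₀ ⊔ α₁ →
      ∃ x₀ ∈ Set.Icc a b, ∃ x₁ ∈ Set.Icc a b,
        x₀ ⊔ x₁ = b ∧ theta a x₀ ≤ α₀ ∧ theta a x₁ ≤ α₁ := by
  intro a b hab α₀ α₁ hθ
  obtain ⟨c, hac, rfl⟩ := hsec a b hab
  have hc : (α₀ ⊔ α₁).r ⊥ c :=
    (α₀ ⊔ α₁).rel_bot_of_inf_eq_bot (theta_le_iff.1 hθ.le) hac le_sup_right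
  obtain ⟨d₀, d₁, h₀, h₁, rfl⟩ := LatticeCon'.isSplit_of_rel_bot hsec hc
  refine ⟨a ⊔ d₀, ⟨le_sup_left, sup_le_sup_left le_sup_left a⟩,
    a ⊔ d₁, ⟨le_sup_left, sup_le_sup_left le_sup_right a⟩,
    (sup_sup_distrib_left ..).symm, theta_le_iff.2 ?_, theta_le_iff.2 ?_⟩
  · simpa only [sup_bot_eq] using α₀.rel_sup_left a h₀
  · simpa only [sup_bot_eq] using α₁.rel_sup_left a h₁
end
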